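/- Let H = G_1 × G_2 × ⋯ be the product of a sequence of metrisable topological groups G_n, equipped with the product topology. A subset A ⊆ H has property (OB) relative to H if and only if A is contained in a product B_1 × B_2 × ⋯ of subsets B_n ⊆ G_n, each having property (OB) relative to G_n. -/

import Mathlib

open Filter Topology
open scoped Pointwise

/-- A (plain) metric given as a distance function. -/
def IsMetric {G : Type*} (d : G → G → ℝ) : Prop :=
  (∀ x y, d x y = 0 ↔ x = y) ∧ (∀ x y, d x y = d y x) ∧ ∀ x y z, d x z ≤ d x y + d y z

/-- The metric `d` induces the topology of `G`. -/
def IsCompatible (G : Type*) [TopologicalSpace G] (d : G → G → ℝ) : Prop :=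
  ∀ (x : G) (s : Set G), s ∈ nhds x ↔ ∃ ε > (0 : ℝ), {y : G | d x y < ε} ⊆ s

/-- A compatible left-invariant metric on a topological group. -/
def IsCompatibleLeftInvariantMetric (G : Type*) [Group G] [TopologicalSpace G]
    (d : G → G → ℝ) : Prop :=
  IsMetric d ∧ IsCompatible G d ∧ ∀ h g f : G, d (h * g) (h * f) = d g f

/-- A set has finite diameter with respect to `d`. -/
def FiniteDiam {G : Type*} (d : G → G → ℝ) (A : Set G) : Prop :=
  ∃ C : ℝ, ∀ x ∈ A, ∀ y ∈ A, d x y ≤ C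

/-- `A` has property (OB) relative to `G`: finite diameter for every compatible
left-invariant metric. -/
def HasRelPropOB (G : Type*) [Group G] [TopologicalSpace G] (A : Set G) : Prop :=
  ∀ d : G → G → ℝ, IsCompatibleLeftInvariantMetric G d → FiniteDiam d A

/-- A sequence tends to infinity in `G` if some compatible left-invariant metric
witnesses `d (g n) 1 → ∞`. -/
def TendsToInfinity (G : Type*) [Group G] [TopologicalSpace G] (g : ℕ → G) : Prop :=
  ∃ d : G → G → ℝ, IsCompatibleLeftInvariantMetric G d ∧
    Filter.Tendsto (fun n => d (g n) 1) Filter.atTop Filter.atTop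

/-- A compatible left-invariant metric is metrically proper if `d (g n) 1 → ∞`
whenever `g n → ∞`. -/
def MetricallyProperMetric (G : Type*) [Group G] [TopologicalSpace G]
    (d : G → G → ℝ) : Prop :=
  ∀ g : ℕ → G, TendsToInfinity G g →
    Filter.Tendsto (fun n => d (g n) 1) Filter.atTop Filter.atTop

/-! If `A` has (OB) in `∏ Gₙ`, so does each projection `Bₙ`: a compatible left-invariant metric
`d` on `Gₙ`, composed with the projection and added to some compatible left-invariant metric on
the product, is again compatible and left-invariant, and it dominates `d` on the `n`-th
coordinates. Such a metric on the product exists by Birkhoff–Kakutani: for a metric inducing the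
left uniformity, the supremum over left translates of its truncation at `1` is left-invariant and
still compatible.

Conversely, let `A ⊆ ∏ Bₙ` and let `D` be a compatible left-invariant metric on the product. The
unit `D`-ball about `1` contains a basic neighbourhood restricting only the coordinates in a finite
set `s`. Writing `x⁻¹ * y` as the product of its coordinates in `s`, embedded by `Pi.mulSingle`,
and a remainder in that neighbourhood, bounds `D x y` by the sum over `s` of the diameters of the
`Bᵢ` for the restrictions of `D` to the factors, plus `1`. -/

open scoped Uniformity

lemma min_add_le_min_add_min_one {a b : ℝ} (ha : 0 ≤ a) (hb : 0 ≤ b) :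
    min (a + b) 1 ≤ min a 1 + min b 1 := by
  simp only [min_def]
  split_ifs <;> linarith

lemma IsMetric.nonneg {G : Type*} {d : G → G → ℝ} (hd : IsMetric d) (x y : G) : 0 ≤ d x y := by
  have h := hd.2.2 x y x
  rw [(hd.1 x x).2 rfl, hd.2.1 y x] at h
  linarith

lemma isCompatible_iff_hasBasis {G : Type*} [TopologicalSpace G] {d : G → G → ℝ} :
    IsCompatible G d ↔ ∀ x, (𝓝 x).HasBasis (fun ε : ℝ => 0 < ε) fun ε => {y | d x y < ε} := by
  simp only [IsCompatible, Filter.hasBasis_iff, gt_iff_lt]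

lemma Pi.isEmbedding_mulSingle {ι : Type*} [DecidableEq ι] {G : ι → Type*}
    [∀ i, One (G i)] [∀ i, TopologicalSpace (G i)] (i : ι) :
    Topology.IsEmbedding (Pi.mulSingle i : G i → ∀ j, G j) :=
  Function.LeftInverse.isEmbedding (fun x => Pi.mulSingle_eq_same i x) (continuous_apply i)
    (continuous_mulSingle i)

namespace IsCompatibleLeftInvariantMetric

variable {G : Type*} [Group G] [TopologicalSpace G] {d : G → G → ℝ}

lemma nonneg (hd : IsCompatibleLeftInvariantMetric G d) (x y : G) : 0 ≤ d x y :=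
  hd.1.nonneg x y

lemma eq_one_inv_mul (hd : IsCompatibleLeftInvariantMetric G d) (x y : G) :
    d x y = d 1 (x⁻¹ * y) := by
  rw [← hd.2.2 x 1 (x⁻¹ * y), mul_one, mul_inv_cancel_left]

lemma one_mul_le_add (hd : IsCompatibleLeftInvariantMetric G d) (a b : G) :
    d 1 (a * b) ≤ d 1 a + d 1 b := by
  calc d 1 (a * b) ≤ d 1 a + d a (a * b) := hd.1.2.2 _ _ _
    _ = d 1 a + d 1 b := by rw [hd.eq_one_inv_mul a, inv_mul_cancel_left]

lemma comap {K : Type*} [Group K] [TopologicalSpace K]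
    (hd : IsCompatibleLeftInvariantMetric G d) (φ : K →* G) (hφ : Topology.IsEmbedding φ) :
    IsCompatibleLeftInvariantMetric K fun a b => d (φ a) (φ b) := by
  obtain ⟨⟨hzero, hsymm, htri⟩, hcompat, hinv⟩ := hd
  refine ⟨⟨fun a b => (hzero _ _).trans hφ.injective.eq_iff, fun a b => hsymm _ _,
    fun a b c => htri _ _ _⟩, ?_, fun f a b => by simp only [map_mul, hinv]⟩
  exact isCompatible_iff_hasBasis.2 fun a =>
    hφ.isInducing.basis_nhds (isCompatible_iff_hasBasis.1 hcompat (φ a))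

lemma add_comp {K : Type*} [Group K] [TopologicalSpace K] {d' : K → K → ℝ}
    (hd : IsCompatibleLeftInvariantMetric G d) (hd' : IsCompatibleLeftInvariantMetric K d')
    (φ : G →* K) (hφ : Continuous φ) :
    IsCompatibleLeftInvariantMetric G fun x y => d x y + d' (φ x) (φ y) := by
  obtain ⟨⟨hzero, hsymm, htri⟩, hcompat, hinv⟩ := hd
  obtain ⟨⟨hzero', hsymm', htri'⟩, hcompat', hinv'⟩ := hd'
  have hnonneg := IsMetric.nonneg ⟨hzero, hsymm, htri⟩
  have hnonneg' := IsMetric.nonneg ⟨hzero', hsymm', htri'⟩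
  refine ⟨⟨fun x y => ⟨fun h => (hzero x y).1 ?_, ?_⟩, fun x y => ?_, fun x y z => ?_⟩, ?_,
    fun f x y => by simp only [map_mul, hinv, hinv']⟩
  · linarith [hnonneg x y, hnonneg' (φ x) (φ y)]
  · rintro rfl
    simp only [(hzero x x).2 rfl, (hzero' _ _).2 rfl, add_zero]
  · simp only [hsymm x, hsymm' (φ x)]
  · linarith [htri x y z, htri' (φ x) (φ y) (φ z)]
  refine isCompatible_iff_hasBasis.2 fun x =>
    (isCompatible_iff_hasBasis.1 hcompat x).to_hasBasis' (fun ε hε => ⟨ε, hε, ?_⟩)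
      fun ε hε => ?_
  · intro y (hy : d x y + d' (φ x) (φ y) < ε)
    exact show d x y < ε by linarith [hnonneg' (φ x) (φ y)]
  · have hball : {y | d x y < ε / 2} ∈ 𝓝 x := (hcompat x _).2 ⟨ε / 2, half_pos hε, subset_rfl⟩
    have hball' : {y | d' (φ x) (φ y) < ε / 2} ∈ 𝓝 x :=
      hφ.continuousAt.preimage_mem_nhds ((hcompat' (φ x) _).2 ⟨ε / 2, half_pos hε, subset_rfl⟩)
    filter_upwards [hball, hball'] with y (hy : d x y < ε / 2) (hy' : d' (φ x) (φ y) < ε / 2)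
    exact show d x y + d' (φ x) (φ y) < ε by linarith

lemma le_sum_mulSingle_add_piecewise {ι : Type*} [DecidableEq ι] {G : ι → Type*}
    [∀ i, Group (G i)] [∀ i, TopologicalSpace (G i)] {D : (∀ i, G i) → (∀ i, G i) → ℝ}
    (hD : IsCompatibleLeftInvariantMetric (∀ i, G i) D) (s : Finset ι) (z : ∀ i, G i) :
    D 1 z ≤ ∑ i ∈ s, D 1 (Pi.mulSingle i (z i)) + D 1 (s.piecewise (1 : ∀ i, G i) z) := by
  induction s using Finset.induction_on with
  | empty => simp
  | insert a s ha ih =>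
    have hsplit : s.piecewise (1 : ∀ i, G i) z =
        Pi.mulSingle a (z a) * (insert a s).piecewise (1 : ∀ i, G i) z := by
      ext i
      by_cases hi : i = a
      · subst hi
        simp [ha]
      · simp [hi, Finset.piecewise]
    rw [Finset.sum_insert ha]
    linarith [hD.one_mul_le_add (Pi.mulSingle a (z a)) ((insert a s).piecewise 1 z), hsplit ▸ ih]

end IsCompatibleLeftInvariantMetric

section BirkhoffKakutani

noncomputable def leftInvariantDist {G : Type*} [Mul G] [Dist G] (g h : G) : ℝ :=
  ⨆ x : G, min (dist (x * g) (x * h)) 1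

variable {G : Type*} [Group G] [MetricSpace G]

lemma min_dist_le_leftInvariantDist (x g h : G) :
    min (dist (x * g) (x * h)) 1 ≤ leftInvariantDist g h :=
  le_ciSup (f := fun y => min (dist (y * g) (y * h)) 1)
    ⟨1, by rintro _ ⟨y, rfl⟩; exact min_le_right _ _⟩ x

lemma leftInvariantDist_le {g h : G} {c : ℝ} (hc : ∀ x, min (dist (x * g) (x * h)) 1 ≤ c) :
    leftInvariantDist g h ≤ c :=
  ciSup_le hc

lemma leftInvariantDist_mul_left (f g h : G) :
    leftInvariantDist (f * g) (f * h) = leftInvariantDist g h := by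
  simp only [leftInvariantDist, ← mul_assoc]
  exact (mul_right_surjective f).iSup_comp fun x => min (dist (x * g) (x * h)) 1

lemma isMetric_leftInvariantDist : IsMetric (leftInvariantDist : G → G → ℝ) := by
  refine ⟨fun g h => ⟨fun h0 => ?_, ?_⟩, fun g h => by simp only [leftInvariantDist, dist_comm],
    fun g h k => leftInvariantDist_le fun x => ?_⟩
  · have := min_dist_le_leftInvariantDist 1 g h
    rw [one_mul, one_mul, h0] at this
    exact dist_le_zero.1 ((min_le_iff.1 this).resolve_right (by norm_num))
  · rintro rfl
    simp [leftInvariantDist]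
  · calc min (dist (x * g) (x * k)) 1
        ≤ min (dist (x * g) (x * h) + dist (x * h) (x * k)) 1 :=
          min_le_min_right 1 (dist_triangle _ _ _)
      _ ≤ min (dist (x * g) (x * h)) 1 + min (dist (x * h) (x * k)) 1 :=
          min_add_le_min_add_min_one dist_nonneg dist_nonneg
      _ ≤ leftInvariantDist g h + leftInvariantDist h k :=
          add_le_add (min_dist_le_leftInvariantDist x g h) (min_dist_le_leftInvariantDist x h k)

variable [IsLeftUniformGroup G]

lemma eventually_forall_dist_mul_left_lt (g : G) {ε : ℝ} (hε : 0 < ε) :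
    ∀ᶠ h in 𝓝 g, ∀ x, dist (x * g) (x * h) < ε := by
  obtain ⟨V, hV, hVε⟩ := mem_comap.1 <|
    uniformity_eq_comap_inv_mul_nhds_one G ▸ Metric.dist_mem_uniformity (α := G) hε
  have hV' : (fun p : G × G => p.1⁻¹ * p.2) ⁻¹' V ∈ 𝓤 G :=
    uniformity_eq_comap_inv_mul_nhds_one G ▸ preimage_mem_comap hV
  filter_upwards [mem_nhds_left g hV'] with h hh x
  -- `(x * g)⁻¹ * (x * h) = g⁻¹ * h`: the left uniformity is invariant under left translation
  exact hVε (show (x * g, x * h) ∈ (fun p : G × G => p.1⁻¹ * p.2) ⁻¹' V by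
    simpa [mul_assoc] using hh)

lemma isCompatible_leftInvariantDist : IsCompatible G leftInvariantDist := by
  refine isCompatible_iff_hasBasis.2 fun g =>
    Metric.nhds_basis_ball.to_hasBasis' (fun ε hε => ⟨min ε 1, lt_min hε one_pos, ?_⟩)
      fun ε hε => ?_
  · intro h (hh : leftInvariantDist g h < min ε 1)
    have := (min_dist_le_leftInvariantDist 1 g h).trans_lt hh
    rw [one_mul, one_mul] at this
    exact Metric.mem_ball'.2 (lt_of_not_ge fun hεh => (min_le_min_right 1 hεh).not_gt this)
  · filter_upwards [eventually_forall_dist_mul_left_lt g (half_pos hε)] with h hh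
    exact (leftInvariantDist_le fun x => (min_le_left _ _).trans (hh x).le).trans_lt
      (half_lt_self hε)

lemma isCompatibleLeftInvariantMetric_leftInvariantDist :
    IsCompatibleLeftInvariantMetric G leftInvariantDist :=
  ⟨isMetric_leftInvariantDist, isCompatible_leftInvariantDist, leftInvariantDist_mul_left⟩

end BirkhoffKakutani

lemma exists_isCompatibleLeftInvariantMetric {G : Type*} [Group G] [TopologicalSpace G]
    [IsTopologicalGroup G] [FirstCountableTopology G] [T0Space G] :
    ∃ d, IsCompatibleLeftInvariantMetric G d := by
  let := IsTopologicalGroup.leftUniformSpace G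
  have : (𝓤 G).IsCountablyGenerated := Filter.comap.isCountablyGenerated _ _
  let := UniformSpace.metricSpace G
  have : IsLeftUniformGroup G := ⟨rfl⟩
  exact ⟨leftInvariantDist, isCompatibleLeftInvariantMetric_leftInvariantDist⟩

lemma FiniteDiam.mono {G : Type*} {d : G → G → ℝ} {A B : Set G} (hA : FiniteDiam d A)
    (hBA : B ⊆ A) : FiniteDiam d B :=
  let ⟨C, hC⟩ := hA
  ⟨C, fun x hx y hy => hC x (hBA hx) y (hBA hy)⟩

lemma HasRelPropOB.mono {G : Type*} [Group G] [TopologicalSpace G] {A B : Set G}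
    (hA : HasRelPropOB G A) (hBA : B ⊆ A) : HasRelPropOB G B :=
  fun d hd => (hA d hd).mono hBA

lemma HasRelPropOB.image {G K : Type*} [Group G] [TopologicalSpace G] [Group K]
    [TopologicalSpace K] {A : Set G} (hA : HasRelPropOB G A) (φ : G →* K) (hφ : Continuous φ)
    (hG : ∃ d, IsCompatibleLeftInvariantMetric G d) : HasRelPropOB K (φ '' A) := by
  intro d hd
  obtain ⟨d₀, hd₀⟩ := hG
  obtain ⟨C, hC⟩ := hA _ (hd₀.add_comp hd φ hφ)
  refine ⟨C, ?_⟩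
  rintro _ ⟨x, hx, rfl⟩ _ ⟨y, hy, rfl⟩
  linarith [hC x hx y hy, hd₀.nonneg x y]

lemma hasRelPropOB_univ_pi {ι : Type*} {G : ι → Type*} [∀ i, Group (G i)]
    [∀ i, TopologicalSpace (G i)] {B : ∀ i, Set (G i)} (hB : ∀ i, HasRelPropOB (G i) (B i)) :
    HasRelPropOB (∀ i, G i) (Set.univ.pi B) := by
  classical
  intro D hD
  choose C hC using fun i =>
    hB i _ (hD.comap (MonoidHom.mulSingle G i) (Pi.isEmbedding_mulSingle i))
  have hball : {z | D 1 z < 1} ∈ 𝓝 (1 : ∀ i, G i) := (hD.2.1 1 _).2 ⟨1, one_pos, subset_rfl⟩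
  rw [nhds_pi, Filter.mem_pi'] at hball
  obtain ⟨s, t, ht, hst⟩ := hball
  refine ⟨∑ i ∈ s, C i + 1, fun x hx y hy => ?_⟩
  have hsingle (i : ι) : D 1 (Pi.mulSingle i ((x⁻¹ * y) i)) ≤ C i := by
    rw [Pi.mul_apply, Pi.inv_apply, Pi.mulSingle_mul, Pi.mulSingle_inv, ← hD.eq_one_inv_mul]
    exact hC i (x i) (hx i trivial) (y i) (hy i trivial)
  have htail : D 1 (s.piecewise 1 (x⁻¹ * y)) < 1 :=
    hst fun i hi => by simpa [Finset.piecewise_eq_of_mem _ _ _ hi] using mem_of_mem_nhds (ht i)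
  calc D x y = D 1 (x⁻¹ * y) := hD.eq_one_inv_mul x y
    _ ≤ ∑ i ∈ s, D 1 (Pi.mulSingle i ((x⁻¹ * y) i)) + D 1 (s.piecewise 1 (x⁻¹ * y)) :=
      hD.le_sum_mulSingle_add_piecewise s _
    _ ≤ ∑ i ∈ s, C i + 1 := add_le_add (Finset.sum_le_sum fun i _ => hsingle i) htail.le

theorem relOB_in_product_iff_contained_in_product_of_relOB
    {G : ℕ → Type*} [∀ n, Group (G n)] [∀ n, TopologicalSpace (G n)]
    [∀ n, IsTopologicalGroup (G n)] [∀ n, TopologicalSpace.MetrizableSpace (G n)]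
    (A : Set (∀ n, G n)) :
    HasRelPropOB (∀ n, G n) A ↔
      ∃ B : ∀ n, Set (G n), (∀ n, HasRelPropOB (G n) (B n)) ∧ A ⊆ Set.univ.pi B := by
  constructor
  · intro hA
    exact ⟨fun n => Function.eval n '' A, fun n => hA.image (Pi.evalMonoidHom G n)
      (continuous_apply n) exists_isCompatibleLeftInvariantMetric, Set.subset_pi_eval_image _ _⟩
  · rintro ⟨B, hB, hAB⟩
    exact (hasRelPropOB_univ_pi hB).mono hAB
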